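/- arXiv:1801.10552 — 3 statements merged into one kernel-verified Lean document; each statement's English description precedes it below -/
import Mathlib

section
/- Let X and Y be random variables taking values in measurable spaces 𝒳 and 𝒴 respectively, let M ≥ 2 be an integer, and let X̄₁, …, X̄_{M−1} be i.i.d. random variables each distributed as X and jointly independent of the pair (X, Y). Let q : 𝒳 × 𝒴 → (0, ∞) be a jointly measurable decoding metric and fix s ≥ 0, and assume g(y) := ∫_𝒳 q(x̄, y)^s dP_X(x̄) is finite for P_Y-almost every y, where P_X and P_Y are the laws of X and Y. Then Pr[∃ m ∈ {1, …, M−1} : q(X̄_m, Y) ≥ q(X, Y)] ≤ E[ exp( − max{0, log( q(X, Y)^s / g(Y) ) − log(M−1)} ) ]. -/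
open MeasureTheory ProbabilityTheory

/-! Conditionally on `(X, Y) = (x, y)` the codewords `X̄ₘ` are still distributed as `X`, so the
union bound and the Chernoff bound `P[q(X̄, y) ≥ q(x, y)] ≤ E[q(X̄, y)^s] / q(x, y)^s` bound the
conditional error probability by `min 1 ((M - 1) g(y) / q(x, y)^s)`, which is exactly
`exp(-[i_s(x, y) - log(M - 1)]⁺)`. Integrating over `(X, Y)` gives the bound. -/

theorem exp_neg_max_zero_log_sub_log_eq_min {t n : ℝ} (ht : 0 < t) (hn : 0 < n) :
    Real.exp (-(max 0 (Real.log t - Real.log n))) = min 1 (n / t) := by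
  rw [← min_neg_neg, neg_zero, neg_sub, Real.exp_monotone.map_min, Real.exp_zero, Real.exp_sub,
    Real.exp_log hn, Real.exp_log ht]

theorem meas_ge_le_ofReal_integral_rpow_div {α : Type*} [MeasurableSpace α] {ν : Measure α}
    {φ : α → ℝ} (hφ : ∀ x, 0 ≤ φ x) {c s : ℝ} (hc : 0 < c) (hs : 0 ≤ s)
    (hint : Integrable (fun x => φ x ^ s) ν) :
    ν {x | c ≤ φ x} ≤ ENNReal.ofReal ((∫ x, φ x ^ s ∂ν) / c ^ s) := by
  have hcs : 0 < c ^ s := Real.rpow_pos_of_pos hc s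
  calc ν {x | c ≤ φ x}
      ≤ ν {x | ENNReal.ofReal (c ^ s) ≤ ENNReal.ofReal (φ x ^ s)} := measure_mono fun x hx =>
        ENNReal.ofReal_le_ofReal (Real.rpow_le_rpow hc.le hx hs)
    _ ≤ (∫⁻ x, ENNReal.ofReal (φ x ^ s) ∂ν) / ENNReal.ofReal (c ^ s) :=
        meas_ge_le_lintegral_div hint.aemeasurable.ennreal_ofReal (by simpa using hcs)
          ENNReal.ofReal_ne_top
    _ = ENNReal.ofReal ((∫ x, φ x ^ s ∂ν) / c ^ s) := by
        rw [← ofReal_integral_eq_lintegral_ofReal hint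
          (ae_of_all _ fun x => Real.rpow_nonneg (hφ x) s), ENNReal.ofReal_div_of_pos hcs]

theorem measure_exists_apply_mem_le_card_mul {ι β : Type*} [Fintype ι] [MeasurableSpace β]
    {ν : Measure (ι → β)} {ρ : Measure β} (hν : ∀ i, ν.map (fun z => z i) = ρ)
    {A : Set β} (hA : MeasurableSet A) :
    ν {z | ∃ i, z i ∈ A} ≤ Fintype.card ι * ρ A := by
  have hunion : {z : ι → β | ∃ i, z i ∈ A} = ⋃ i, (fun z => z i) ⁻¹' A := by
    ext z; simp
  have heach (i : ι) : ν ((fun z => z i) ⁻¹' A) = ρ A := by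
    rw [← Measure.map_apply (measurable_pi_apply i) hA, hν]
  calc ν {z | ∃ i, z i ∈ A} ≤ ∑' i, ν ((fun z => z i) ⁻¹' A) := by
        rw [hunion]; exact measure_iUnion_le _
    _ = Fintype.card ι * ρ A := by simp [heach]

theorem integral_pos_of_forall_pos {α : Type*} [MeasurableSpace α] {ρ : Measure α} [NeZero ρ]
    {f : α → ℝ} (hf : ∀ x, 0 < f x) (hint : Integrable f ρ) : 0 < ∫ x, f x ∂ρ := by
  have hsupp : Function.support f = Set.univ :=
    Set.eq_univ_of_forall fun x => (hf x).ne'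
  rw [integral_pos_iff_support_of_nonneg (fun x => (hf x).le) hint, hsupp]
  exact Measure.measure_univ_pos.mpr (NeZero.ne ρ)

theorem measure_exists_le_apply_le_ofReal_exp {ι α : Type*} [Fintype ι] [Nonempty ι]
    [MeasurableSpace α] {ν : Measure (ι → α)} [IsProbabilityMeasure ν] {ρ : Measure α}
    (hν : ∀ i, ν.map (fun z => z i) = ρ) {φ : α → ℝ} (hφm : Measurable φ) (hφ : ∀ x, 0 < φ x)
    {c s : ℝ} (hc : 0 < c) (hs : 0 ≤ s) (hint : Integrable (fun x => φ x ^ s) ρ) :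
    ν {z | ∃ i, c ≤ φ (z i)} ≤ ENNReal.ofReal (Real.exp
      (-(max 0 (Real.log (c ^ s / ∫ x, φ x ^ s ∂ρ) - Real.log (Fintype.card ι))))) := by
  have : IsProbabilityMeasure ρ :=
    hν (Classical.arbitrary ι) ▸
      Measure.isProbabilityMeasure_map (measurable_pi_apply _).aemeasurable
  have hg : 0 < ∫ x, φ x ^ s ∂ρ :=
    integral_pos_of_forall_pos (fun x => Real.rpow_pos_of_pos (hφ x) s) hint
  rw [exp_neg_max_zero_log_sub_log_eq_min (div_pos (Real.rpow_pos_of_pos hc s) hg)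
      (Nat.cast_pos.mpr Fintype.card_pos), div_div_eq_mul_div, mul_div_assoc,
    ENNReal.ofReal_mono.map_min, ENNReal.ofReal_one, ENNReal.ofReal_mul (Nat.cast_nonneg _),
    ENNReal.ofReal_natCast]
  exact le_min prob_le_one <|
    (measure_exists_apply_mem_le_card_mul hν (measurableSet_le measurable_const hφm)).trans <|
      mul_le_mul_right (meas_ge_le_ofReal_integral_rpow_div (fun x => (hφ x).le) hc hs hint) _

theorem integrable_exp_neg_max_zero {α : Type*} [MeasurableSpace α] {μ : Measure α}
    [IsFiniteMeasure μ] {h : α → ℝ} (hh : Measurable h) :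
    Integrable (fun x => Real.exp (-(max 0 (h x)))) μ := by
  refine Integrable.of_bound (by fun_prop) 1 (ae_of_all _ fun x => ?_)
  rw [Real.norm_of_nonneg (Real.exp_pos _).le, Real.exp_le_one_iff, neg_nonpos]
  exact le_max_left _ _

theorem ProbabilityTheory.IndepFun.measure_preimage_prodMk_eq_lintegral {Ω α β : Type*}
    [MeasurableSpace Ω] [MeasurableSpace α] [MeasurableSpace β] {μ : Measure Ω} [IsFiniteMeasure μ]
    {W : Ω → α} {Z : Ω → β} (hW : Measurable W) (hZ : Measurable Z) (hWZ : IndepFun W Z μ)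
    {S : Set (α × β)} (hS : MeasurableSet S) :
    μ ((fun ω => (W ω, Z ω)) ⁻¹' S) = ∫⁻ ω, μ.map Z (Prod.mk (W ω) ⁻¹' S) ∂μ := by
  rw [← Measure.map_apply (hW.prodMk hZ) hS,
    (indepFun_iff_map_prod_eq_prod_map_map hW.aemeasurable hZ.aemeasurable).mp hWZ,
    Measure.prod_apply hS, lintegral_map (measurable_measure_prodMk_left hS) hW]

theorem rcus_bound_probabilistic_form_general
    {Ω 𝒳 𝒴 : Type*} [MeasurableSpace Ω] [MeasurableSpace 𝒳] [MeasurableSpace 𝒴]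
    (μ : Measure Ω) [IsProbabilityMeasure μ]
    (X : Ω → 𝒳) (Y : Ω → 𝒴) (hX : Measurable X) (hY : Measurable Y)
    (M : ℕ) (hM : 2 ≤ M)
    (Xbar : Fin (M - 1) → Ω → 𝒳) (hXbarMeas : ∀ m, Measurable (Xbar m))
    (hIdent : ∀ m, IdentDistrib (Xbar m) X μ μ)
    (hIndepXY : IndepFun (fun ω m => Xbar m ω) (fun ω => (X ω, Y ω)) μ)
    (q : 𝒳 → 𝒴 → ℝ) (hq : Measurable fun p : 𝒳 × 𝒴 => q p.1 p.2)
    (hqpos : ∀ x y, 0 < q x y)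
    (s : ℝ) (hs : 0 ≤ s)
    (g : 𝒴 → ℝ) (hg : ∀ y, g y = ∫ x, q x y ^ s ∂(μ.map X))
    (hgfin : ∀ᵐ y ∂(μ.map Y), Integrable (fun x => q x y ^ s) (μ.map X)) :
    (μ {ω | ∃ m : Fin (M - 1), q (Xbar m ω) (Y ω) ≥ q (X ω) (Y ω)}).toReal ≤
      ∫ ω, Real.exp
        (-(max 0 (Real.log (q (X ω) (Y ω) ^ s / g (Y ω)) - Real.log ((M : ℝ) - 1)))) ∂μ := by
  set Z : Ω → Fin (M - 1) → 𝒳 := fun ω m => Xbar m ω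
  set S : Set ((𝒳 × 𝒴) × (Fin (M - 1) → 𝒳)) := {p | ∃ m, q p.1.1 p.1.2 ≤ q (p.2 m) p.1.2}
  set F : Ω → ℝ := fun ω =>
    Real.exp (-(max 0 (Real.log (q (X ω) (Y ω) ^ s / g (Y ω)) - Real.log ((M : ℝ) - 1))))
  have hZ : Measurable Z := measurable_pi_lambda _ hXbarMeas
  have : IsProbabilityMeasure (μ.map Z) := Measure.isProbabilityMeasure_map hZ.aemeasurable
  have : Nonempty (Fin (M - 1)) := ⟨⟨0, by omega⟩⟩
  have hmarg (m : Fin (M - 1)) : (μ.map Z).map (fun z => z m) = μ.map X := by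
    rw [Measure.map_map (measurable_pi_apply m) hZ]
    exact (hIdent m).map_eq
  have hcard : ((Fintype.card (Fin (M - 1)) : ℕ) : ℝ) = (M : ℝ) - 1 := by
    rw [Fintype.card_fin, Nat.cast_sub (by omega), Nat.cast_one]
  have hS : MeasurableSet S := by
    simp only [S, Set.ofPred_exists]
    exact .iUnion fun m => measurableSet_le (by fun_prop) (by fun_prop)
  have hgm : Measurable g := by
    rw [funext hg]
    exact ((hq.pow_const s).stronglyMeasurable.integral_prod_left').measurable
  have hF : Integrable F μ := integrable_exp_neg_max_zero (by fun_prop)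
  have hpointwise : ∀ᵐ ω ∂μ, μ.map Z (Prod.mk (X ω, Y ω) ⁻¹' S) ≤ ENNReal.ofReal (F ω) := by
    filter_upwards [ae_of_ae_map hY.aemeasurable hgfin] with ω hω
    simp only [F, hg, ← hcard]
    exact measure_exists_le_apply_le_ofReal_exp hmarg (by fun_prop) (hqpos · _) (hqpos _ _) hs hω
  refine ENNReal.toReal_le_of_le_ofReal (integral_nonneg fun _ => (Real.exp_pos _).le) ?_
  calc μ {ω | ∃ m : Fin (M - 1), q (Xbar m ω) (Y ω) ≥ q (X ω) (Y ω)}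
      = ∫⁻ ω, μ.map Z (Prod.mk (X ω, Y ω) ⁻¹' S) ∂μ :=
        hIndepXY.symm.measure_preimage_prodMk_eq_lintegral (hX.prodMk hY) hZ hS
    _ ≤ ∫⁻ ω, ENNReal.ofReal (F ω) ∂μ := lintegral_mono_ae hpointwise
    _ = ENNReal.ofReal (∫ ω, F ω ∂μ) :=
        (ofReal_integral_eq_lintegral_ofReal hF (ae_of_all _ fun _ => (Real.exp_pos _).le)).symm

/-- The random-coding union bound with parameter `s` (RCUs bound), probabilistic form:
the probability that at least one of the `M - 1` i.i.d. alternative codewords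
`X̄₁, …, X̄_{M-1}` (each distributed as `X` and jointly independent of `(X, Y)`) achieves a
decoding metric at least as large as that of the transmitted codeword `X` is bounded by
`E[exp(−[i_s(X,Y) − log(M−1)]⁺)]`, where
`i_s(x,y) = log(q(x,y)^s / ∫ q(x̄,y)^s dP_X(x̄))` is the generalized information density. -/
theorem rcus_bound_probabilistic_form
    {Ω 𝒳 𝒴 : Type*} [MeasurableSpace Ω] [MeasurableSpace 𝒳] [MeasurableSpace 𝒴]
    (μ : Measure Ω) [IsProbabilityMeasure μ]
    (X : Ω → 𝒳) (Y : Ω → 𝒴) (hX : Measurable X) (hY : Measurable Y)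
    (M : ℕ) (hM : 2 ≤ M)
    (Xbar : Fin (M - 1) → Ω → 𝒳) (hXbarMeas : ∀ m, Measurable (Xbar m))
    (hIdent : ∀ m, IdentDistrib (Xbar m) X μ μ)
    (hIndepFam : iIndepFun Xbar μ)
    (hIndepXY : IndepFun (fun ω m => Xbar m ω) (fun ω => (X ω, Y ω)) μ)
    (q : 𝒳 → 𝒴 → ℝ) (hq : Measurable fun p : 𝒳 × 𝒴 => q p.1 p.2)
    (hqpos : ∀ x y, 0 < q x y)
    (s : ℝ) (hs : 0 ≤ s)
    (g : 𝒴 → ℝ) (hg : ∀ y, g y = ∫ x, q x y ^ s ∂(μ.map X))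
    (hgfin : ∀ᵐ y ∂(μ.map Y), Integrable (fun x => q x y ^ s) (μ.map X)) :
    (μ {ω | ∃ m : Fin (M - 1), q (Xbar m ω) (Y ω) ≥ q (X ω) (Y ω)}).toReal ≤
      ∫ ω, Real.exp
        (-(max 0 (Real.log (q (X ω) (Y ω) ^ s / g (Y ω)) - Real.log ((M : ℝ) - 1)))) ∂μ :=
  rcus_bound_probabilistic_form_general μ X Y hX hY M hM Xbar hXbarMeas hIdent hIndepXY q hq hqpos s
    hs g hg hgfin
end

section
/- Let 𝒳 and 𝒴 be measurable spaces, K a Markov kernel from 𝒳 to 𝒴, P a probability measure on 𝒳, q : 𝒳 × 𝒴 → (0, ∞) a jointly measurable decoding metric, s ≥ 0, and M ≥ 2 an integer. For a codebook c : {1, …, M} → 𝒳 define the (pessimistic, maximum-metric-decoder) average error probability ε(c) = (1/M) Σ_{m=1}^{M} K(c_m)({ y : ∃ m' ≠ m, q(c_{m'}, y) ≥ q(c_m, y) }). Assume i_s(x, y) := log( q(x, y)^s / ∫_𝒳 q(x̄, y)^s dP(x̄) ) is well defined (the integral is finite) for P⊗K-almost every (x, y). Then there exists a codebook c such that ε(c)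 ≤ ∫_𝒳 ∫_𝒴 exp( − max{0, i_s(x, y) − log(M−1)} ) dK(x)(y) dP(x). -/
/-!
Random coding: draw the `M` codewords i.i.d. from `P`. Given the transmitted codeword `x` and the
channel output `y`, the union bound over the `M - 1` independent competitors and Markov's
inequality for `q(X̄, y)^s` bound the conditional error probability by
`min 1 ((M - 1) 𝔼[q(X̄, y)^s] / q(x, y)^s) = exp(-[i_s(x, y) - log(M - 1)]⁺)`.
Integrating over `(x, y)` and averaging over the messages bounds the ensemble-average error
probability, and some codebook does no worse than the average.
-/

open MeasureTheory ProbabilityTheory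
open scoped ENNReal

section General

variable {α β : Type*} [MeasurableSpace α] [MeasurableSpace β]

theorem measure_le_le_lintegral_rpow_div (μ : Measure α) {f : α → ℝ} (hf : Measurable f)
    {a : ℝ} (ha : 0 < a) {s : ℝ} (hs : 0 ≤ s) :
    μ {x | a ≤ f x} ≤ (∫⁻ x, ENNReal.ofReal (f x ^ s) ∂μ) / ENNReal.ofReal (a ^ s) := by
  refine (measure_mono fun x (hx : a ≤ f x) => ?_).trans
    (meas_ge_le_lintegral_div (by fun_prop) ?_ ENNReal.ofReal_ne_top)
  · exact ENNReal.ofReal_le_ofReal (Real.rpow_le_rpow ha.le hx hs)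
  · exact ENNReal.ofReal_ne_zero_iff.2 (Real.rpow_pos_of_pos ha s)

theorem lintegral_measure_exists_mem_le {ι : Type*} [Fintype ι] (P : Measure α)
    [IsProbabilityMeasure P] (ν : Measure β) [SFinite ν] {S : Set (α × β)} (hS : MeasurableSet S) :
    ∫⁻ r, ν {y | ∃ i, (r i, y) ∈ S} ∂(Measure.pi fun _ : ι => P) ≤
      ∫⁻ y, min 1 (Fintype.card ι * P {x | (x, y) ∈ S}) ∂ν := by
  set π := Measure.pi fun _ : ι => P
  have hE : MeasurableSet {p : (ι → α) × β | ∃ i, (p.1 i, p.2) ∈ S} := by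
    rw [Set.ofPred_exists]
    exact .iUnion fun i => (measurable_pi_apply i).prodMap measurable_id hS
  calc ∫⁻ r, ν {y | ∃ i, (r i, y) ∈ S} ∂π
      = π.prod ν {p | ∃ i, (p.1 i, p.2) ∈ S} := (Measure.prod_apply hE).symm
    _ = ∫⁻ y, π {r | ∃ i, (r i, y) ∈ S} ∂ν := Measure.prod_apply_symm hE
    _ ≤ _ := by
      refine lintegral_mono fun y => le_min prob_le_one ?_
      have hSy : MeasurableSet {x | (x, y) ∈ S} := measurable_prodMk_right hS
      calc π {r | ∃ i, (r i, y) ∈ S}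
          = π (⋃ i, Function.eval i ⁻¹' {x | (x, y) ∈ S}) := by rw [Set.ofPred_exists]; rfl
        _ ≤ ∑ i, π (Function.eval i ⁻¹' {x | (x, y) ∈ S}) := measure_iUnion_fintype_le _ _
        _ = ∑ _i : ι, P {x | (x, y) ∈ S} := Finset.sum_congr rfl fun i _ =>
          (measurePreserving_eval (fun _ => P) i).measure_preimage hSy.nullMeasurableSet
        _ = Fintype.card ι * P {x | (x, y) ∈ S} := by
          rw [Finset.sum_const, Finset.card_univ, nsmul_eq_mul]

theorem lintegral_lintegral_ofReal_eq_ofReal_integral_integral (μ : Measure α) [SFinite μ]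
    (κ : Kernel α β) [IsSFiniteKernel κ] {g : α → β → ℝ} (hg : Measurable (Function.uncurry g))
    (hg_int : Integrable (Function.uncurry g) (μ ⊗ₘ κ)) (hg_nonneg : ∀ x y, 0 ≤ g x y) :
    ∫⁻ x, ∫⁻ y, ENNReal.ofReal (g x y) ∂κ x ∂μ = ENNReal.ofReal (∫ x, ∫ y, g x y ∂κ x ∂μ) := by
  calc ∫⁻ x, ∫⁻ y, ENNReal.ofReal (g x y) ∂κ x ∂μ
      = ∫⁻ p, ENNReal.ofReal (Function.uncurry g p) ∂(μ ⊗ₘ κ) :=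
        (Measure.lintegral_compProd (ENNReal.measurable_ofReal.comp hg)).symm
    _ = ENNReal.ofReal (∫ p, Function.uncurry g p ∂(μ ⊗ₘ κ)) :=
        (ofReal_integral_eq_lintegral_ofReal hg_int (ae_of_all _ fun p => hg_nonneg p.1 p.2)).symm
    _ = ENNReal.ofReal (∫ x, ∫ y, g x y ∂κ x ∂μ) := by rw [Measure.integral_compProd hg_int]; rfl

theorem measurable_log_rpow_div_integral (P : Measure α) [SFinite P] {q : α → β → ℝ}
    (hq : Measurable fun p : α × β => q p.1 p.2) (s : ℝ) :
    Measurable fun p : α × β => Real.log (q p.1 p.2 ^ s / ∫ x, q x p.2 ^ s ∂P) := by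
  have h_norm : Measurable fun y => ∫ x, q x y ^ s ∂P :=
    (StronglyMeasurable.integral_prod_left (f := fun x y => q x y ^ s)
      (by fun_prop : Measurable _).stronglyMeasurable).measurable
  exact ((hq.pow_const s).div (h_norm.comp measurable_snd)).log

theorem Real.exp_neg_max_zero_log_div_sub_log {b I x : ℝ} (hb : 0 < b) (hI : 0 < I) (hx : 0 < x) :
    Real.exp (-(max 0 (Real.log (b / I) - Real.log x))) = min 1 (x * I / b) := by
  rw [← min_neg_neg, Real.exp_monotone.map_min, neg_zero, Real.exp_zero, neg_sub,
    Real.exp_sub, Real.exp_log hx, Real.exp_log (div_pos hb hI), div_div_eq_mul_div]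

theorem Real.exp_neg_max_zero_le_one (t : ℝ) : Real.exp (-(max 0 t)) ≤ 1 :=
  Real.exp_le_one_iff.2 (neg_nonpos.2 (le_max_left _ _))

theorem min_one_mul_measure_le_ofReal_exp (P : Measure α) [IsProbabilityMeasure P] {f : α → ℝ}
    (hf : Measurable f) (hf_pos : ∀ x, 0 < f x) {s : ℝ} (hs : 0 ≤ s)
    (hf_int : Integrable (fun x => f x ^ s) P) {a : ℝ} (ha : 0 < a) {n : ℕ} (hn : 0 < n) :
    min 1 (n * P {x | a ≤ f x}) ≤
      ENNReal.ofReal (Real.exp (-(max 0 (Real.log (a ^ s / ∫ x, f x ^ s ∂P) - Real.log n)))) := by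
  have hfs_pos : ∀ x, 0 < f x ^ s := fun x => Real.rpow_pos_of_pos (hf_pos x) s
  have hI : 0 < ∫ x, f x ^ s ∂P := by
    rw [integral_pos_iff_support_of_nonneg (fun x => (hfs_pos x).le) hf_int,
      Function.support_eq_univ fun x => (hfs_pos x).ne', measure_univ]
    exact one_pos
  have has : 0 < a ^ s := Real.rpow_pos_of_pos ha s
  rw [Real.exp_neg_max_zero_log_div_sub_log has hI (Nat.cast_pos.2 hn),
    ENNReal.ofReal_min, ENNReal.ofReal_one, mul_div_assoc,
    ENNReal.ofReal_mul n.cast_nonneg, ENNReal.ofReal_natCast, ENNReal.ofReal_div_of_pos has,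
    ofReal_integral_eq_lintegral_ofReal hf_int (ae_of_all _ fun x => (hfs_pos x).le)]
  gcongr
  exact measure_le_le_lintegral_rpow_div P hf ha hs

end General

section Coding

variable {𝒳 𝒴 : Type*}

/-- Ties count as errors: the pessimistic maximum-metric decoder. -/
def decodingErrorSet {ι : Type*} (q : 𝒳 → 𝒴 → ℝ) (c : ι → 𝒳) (m : ι) : Set 𝒴 :=
  {y | ∃ m', m' ≠ m ∧ q (c m') y ≥ q (c m) y}

theorem decodingErrorSet_insertNth {n : ℕ} (q : 𝒳 → 𝒴 → ℝ) (m : Fin (n + 1)) (x : 𝒳)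
    (r : Fin n → 𝒳) :
    decodingErrorSet q (m.insertNth x r) m = {y | ∃ j, q x y ≤ q (r j) y} := by
  ext y
  constructor
  · rintro ⟨m', hm', hy⟩
    obtain ⟨j, rfl⟩ := Fin.exists_succAbove_eq hm'
    exact ⟨j, by simpa using hy⟩
  · rintro ⟨j, hy⟩
    exact ⟨m.succAbove j, m.succAbove_ne j, by simpa using hy⟩

variable [MeasurableSpace 𝒳] [MeasurableSpace 𝒴]

noncomputable def averageErrorProb {ι : Type*} [Fintype ι] (K : Kernel 𝒳 𝒴)
    (q : 𝒳 → 𝒴 → ℝ) (c : ι → 𝒳) : ℝ≥0∞ :=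
  (Fintype.card ι : ℝ≥0∞)⁻¹ * ∑ m, K (c m) (decodingErrorSet q c m)

theorem measurable_kernel_decodingErrorSet {ι : Type*} [Countable ι] (K : Kernel 𝒳 𝒴)
    [IsSFiniteKernel K] {q : 𝒳 → 𝒴 → ℝ} (hq : Measurable fun p : 𝒳 × 𝒴 => q p.1 p.2) (m : ι) :
    Measurable fun c : ι → 𝒳 => K (c m) (decodingErrorSet q c m) := by
  have hE : MeasurableSet {p : (ι → 𝒳) × 𝒴 | p.2 ∈ decodingErrorSet q p.1 m} :=
    measurableSet_setOfPred.2 <| Measurable.exists fun m' =>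
      measurable_const.and <|
        measurableSet_setOfPred.1 (measurableSet_le (by fun_prop) (by fun_prop))
  exact Kernel.measurable_kernel_prodMk_left
    (κ := K.comap (fun c => c m) (measurable_pi_apply m)) hE

theorem measurable_averageErrorProb {ι : Type*} [Fintype ι] (K : Kernel 𝒳 𝒴) [IsSFiniteKernel K]
    {q : 𝒳 → 𝒴 → ℝ} (hq : Measurable fun p : 𝒳 × 𝒴 => q p.1 p.2) :
    Measurable (averageErrorProb (ι := ι) K q) :=
  (Finset.measurable_sum _ fun m _ => measurable_kernel_decodingErrorSet K hq m).const_mul _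

theorem averageErrorProb_eq_ofReal {ι : Type*} [Fintype ι] [Nonempty ι] (K : Kernel 𝒳 𝒴)
    [IsFiniteKernel K] (q : 𝒳 → 𝒴 → ℝ) (c : ι → 𝒳) :
    averageErrorProb K q c = ENNReal.ofReal
      (1 / (Fintype.card ι : ℝ) * ∑ m, (K (c m) (decodingErrorSet q c m)).toReal) := by
  rw [averageErrorProb, ENNReal.ofReal_mul (by positivity), one_div,
    ENNReal.ofReal_inv_of_pos (by positivity), ENNReal.ofReal_natCast,
    ENNReal.ofReal_sum_of_nonneg fun m _ => ENNReal.toReal_nonneg]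
  simp only [ENNReal.ofReal_toReal (measure_ne_top _ _)]

theorem lintegral_kernel_decodingErrorSet_le {n : ℕ} (K : Kernel 𝒳 𝒴) [IsSFiniteKernel K]
    (P : Measure 𝒳) [IsProbabilityMeasure P] {q : 𝒳 → 𝒴 → ℝ}
    (hq : Measurable fun p : 𝒳 × 𝒴 => q p.1 p.2) (m : Fin (n + 1)) :
    ∫⁻ c, K (c m) (decodingErrorSet q c m) ∂(Measure.pi fun _ => P) ≤
      ∫⁻ x, ∫⁻ y, min 1 (n * P {x' | q x y ≤ q x' y}) ∂K x ∂P := by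
  rw [← ((measurePreserving_piFinSuccAbove (fun _ => P) m).symm _).lintegral_comp_emb
    (MeasurableEquiv.measurableEmbedding _)]
  refine (lintegral_prod_le _).trans (lintegral_mono fun x => ?_)
  have hS : MeasurableSet {p : 𝒳 × 𝒴 | q x p.2 ≤ q p.1 p.2} :=
    measurableSet_le (by fun_prop) (by fun_prop)
  have h_symm : ∀ r, (MeasurableEquiv.piFinSuccAbove (fun _ => 𝒳) m).symm (x, r) =
      m.insertNth x r := fun _ => rfl
  simp only [h_symm, Fin.insertNth_apply_same, decodingErrorSet_insertNth]
  have h_union := lintegral_measure_exists_mem_le (ι := Fin n) P (K x) hS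
  rw [Fintype.card_fin] at h_union
  exact h_union

theorem lintegral_averageErrorProb_le {n : ℕ} (K : Kernel 𝒳 𝒴) [IsSFiniteKernel K]
    (P : Measure 𝒳) [IsProbabilityMeasure P] {q : 𝒳 → 𝒴 → ℝ}
    (hq : Measurable fun p : 𝒳 × 𝒴 => q p.1 p.2) :
    ∫⁻ c, averageErrorProb K q c ∂(Measure.pi fun _ : Fin (n + 1) => P) ≤
      ∫⁻ x, ∫⁻ y, min 1 (n * P {x' | q x y ≤ q x' y}) ∂K x ∂P := by
  have hmeas := fun m : Fin (n + 1) => measurable_kernel_decodingErrorSet K hq m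
  simp only [averageErrorProb]
  rw [lintegral_const_mul _ (Finset.measurable_sum _ fun m _ => hmeas m),
    lintegral_finsetSum _ fun m _ => hmeas m]
  calc _ ≤ (Fintype.card (Fin (n + 1)) : ℝ≥0∞)⁻¹ *
        ∑ _m : Fin (n + 1), ∫⁻ x, ∫⁻ y, min 1 (n * P {x' | q x y ≤ q x' y}) ∂K x ∂P := by
        gcongr with m
        exact lintegral_kernel_decodingErrorSet_le K P hq m
    _ = _ := by
      rw [Finset.sum_const, Finset.card_univ, nsmul_eq_mul, ← mul_assoc,
        ENNReal.inv_mul_cancel (by simp) (by simp), one_mul]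

end Coding

/-- Code-existence form of the RCUs bound (Theorem 1 of the paper): for a channel given by
a Markov kernel `K`, an input distribution `P`, a decoding metric `q` and a parameter `s ≥ 0`,
there exists a codebook `c` of `M` codewords whose average error probability, under the
pessimistic maximum-metric decoder, is at most
`∫∫ exp(−[i_s(x,y) − log(M−1)]⁺) dK(x)(y) dP(x)`, where
`i_s(x,y) = log(q(x,y)^s / ∫ q(x̄,y)^s dP(x̄))` is the generalized information density. -/
theorem rcus_bound_code_existence
    {𝒳 𝒴 : Type*} [MeasurableSpace 𝒳] [MeasurableSpace 𝒴]
    (K : Kernel 𝒳 𝒴) [IsMarkovKernel K]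
    (P : Measure 𝒳) [IsProbabilityMeasure P]
    (q : 𝒳 → 𝒴 → ℝ) (hq : Measurable fun p : 𝒳 × 𝒴 => q p.1 p.2)
    (hqpos : ∀ x y, 0 < q x y)
    (s : ℝ) (hs : 0 ≤ s)
    (M : ℕ) (hM : 2 ≤ M)
    (hint : ∀ᵐ p ∂(P ⊗ₘ K), Integrable (fun x' => q x' p.2 ^ s) P)
    (ε : (Fin M → 𝒳) → ℝ)
    (hε : ∀ c : Fin M → 𝒳, ε c =
      (1 / (M : ℝ)) * ∑ m : Fin M,
        (K (c m) {y | ∃ m' : Fin M, m' ≠ m ∧ q (c m') y ≥ q (c m) y}).toReal)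
    (i_s : 𝒳 → 𝒴 → ℝ)
    (hi_s : ∀ x y, i_s x y = Real.log (q x y ^ s / ∫ x', q x' y ^ s ∂P)) :
    ∃ c : Fin M → 𝒳,
      ε c ≤ ∫ x, ∫ y, Real.exp (-(max 0 (i_s x y - Real.log ((M : ℝ) - 1)))) ∂(K x) ∂P := by
  obtain ⟨n, rfl⟩ : ∃ n, M = n + 1 := ⟨M - 1, by omega⟩
  set g : 𝒳 → 𝒴 → ℝ := fun x y =>
    Real.exp (-(max 0 (i_s x y - Real.log (((n + 1 : ℕ) : ℝ) - 1))))
  have h_pointwise : ∀ᵐ x ∂P, ∀ᵐ y ∂K x,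
      min 1 (n * P {x' | q x y ≤ q x' y}) ≤ ENNReal.ofReal (g x y) := by
    filter_upwards [Measure.ae_ae_of_ae_compProd hint] with x hx
    filter_upwards [hx] with y hy
    have hM' : ((n + 1 : ℕ) : ℝ) - 1 = n := by push_cast; ring
    simp only [g, hi_s, hM']
    exact min_one_mul_measure_le_ofReal_exp P (by fun_prop) (hqpos · y) hs hy (hqpos x y) (by omega)
  have hg_meas : Measurable (Function.uncurry g) := by
    have hi_meas : Measurable fun p : 𝒳 × 𝒴 => i_s p.1 p.2 := by
      simpa only [hi_s] using measurable_log_rpow_div_integral P hq s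
    exact Real.measurable_exp.comp ((measurable_const.max (hi_meas.sub_const _)).neg)
  have hg_int : Integrable (Function.uncurry g) (P ⊗ₘ K) :=
    Integrable.of_bound hg_meas.aestronglyMeasurable 1 (ae_of_all _ fun _ =>
      (Real.norm_of_nonneg (Real.exp_pos _).le).trans_le (Real.exp_neg_max_zero_le_one _))
  obtain ⟨c, hc⟩ := exists_le_lintegral (μ := Measure.pi fun _ : Fin (n + 1) => P)
    (measurable_averageErrorProb K hq).aemeasurable
  refine ⟨c, (ENNReal.ofReal_le_ofReal_iff
    (integral_nonneg fun x => integral_nonneg fun y => (Real.exp_pos _).le)).1 ?_⟩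
  calc ENNReal.ofReal (ε c) = averageErrorProb K q c := by
        rw [averageErrorProb_eq_ofReal, Fintype.card_fin, hε c]; rfl
    _ ≤ ∫⁻ c, averageErrorProb K q c ∂(Measure.pi fun _ => P) := hc
    _ ≤ ∫⁻ x, ∫⁻ y, min 1 (n * P {x' | q x y ≤ q x' y}) ∂K x ∂P :=
      lintegral_averageErrorProb_le K P hq
    _ ≤ ∫⁻ x, ∫⁻ y, ENNReal.ofReal (g x y) ∂K x ∂P :=
      lintegral_mono_ae (h_pointwise.mono fun x hx => lintegral_mono_ae hx)
    _ = _ := lintegral_lintegral_ofReal_eq_ofReal_integral_integral P K hg_meas hg_int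
      fun x y => (Real.exp_pos _).le
end

section
/- Let X and Y be random variables taking values in measurable spaces 𝒳 and 𝒴 respectively, let M ≥ 2 be an integer, and let X̄₁, …, X̄_{M−1} be i.i.d. random variables each distributed as X and jointly independent of the pair (X, Y). Let q : 𝒳 × 𝒴 → (0, ∞) be a jointly measurable decoding metric. Then Pr[∃ m ∈ {1, …, M−1} : q(X̄_m, Y) ≥ q(X, Y)] ≤ E[ min{ 1, (M−1) · Pr[ q(X̄₁, Y) ≥ q(X, Y) | X, Y ] } ]. -/
/-!
Conditionally on `Z = (X, Y)`, the probability that some alternative codeword wins is at most `1`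
and, by the union bound, at most the sum of the `M - 1` pairwise conditional error probabilities.
Each `X̄ₘ` is independent of `Z` and distributed as `X`, so all pairs `(X̄ₘ, Z)` have the same law,
and hence all pairwise conditional error probabilities agree almost surely with the one for `X̄₁`.
Integrating the pointwise bound `min 1 ((M - 1) · Pr[X̄₁ wins | Z])` gives the claim.
-/

open MeasureTheory ProbabilityTheory

section ConditionalProbability

variable {Ω : Type*} {m m₀ : MeasurableSpace Ω} {μ : Measure Ω}

theorem indicator_iUnion_le_sum_indicator {ι : Type*} [Fintype ι] (A : ι → Set Ω) :
    (⋃ i, A i).indicator (1 : Ω → ℝ) ≤ ∑ i, (A i).indicator 1 := by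
  intro ω
  rw [Finset.sum_apply]
  by_cases hω : ω ∈ ⋃ i, A i
  · obtain ⟨i, hi⟩ := Set.mem_iUnion.1 hω
    calc (⋃ i, A i).indicator (1 : Ω → ℝ) ω = (A i).indicator 1 ω := by
          simp only [Set.indicator_of_mem hω, Set.indicator_of_mem hi]
      _ ≤ ∑ j, (A j).indicator (1 : Ω → ℝ) ω :=
          Finset.single_le_sum (fun _ _ => Set.indicator_nonneg (fun _ _ => zero_le_one) ω)
            (Finset.mem_univ i)
  · rw [Set.indicator_of_notMem hω]
    exact Finset.sum_nonneg fun _ _ => Set.indicator_nonneg (fun _ _ => zero_le_one) ω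

theorem condExp_indicator_iUnion_le_sum [IsFiniteMeasure μ] {ι : Type*} [Fintype ι]
    {A : ι → Set Ω} (hA : ∀ i, MeasurableSet[m₀] (A i)) :
    μ[(⋃ i, A i).indicator (1 : Ω → ℝ) | m] ≤ᵐ[μ] ∑ i, μ[(A i).indicator 1 | m] := by
  have hint : ∀ i ∈ Finset.univ, Integrable ((A i).indicator (1 : Ω → ℝ)) μ :=
    fun i _ => (integrable_const 1).indicator (hA i)
  exact (condExp_mono ((integrable_const 1).indicator (MeasurableSet.iUnion hA))
    (integrable_finsetSum' _ hint) (.of_forall (indicator_iUnion_le_sum_indicator A))).trans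
    (condExp_finsetSum hint m).le

theorem condExp_indicator_le_one [IsFiniteMeasure μ] (hm : m ≤ m₀) {s : Set Ω}
    (hs : MeasurableSet[m₀] s) : μ[s.indicator (1 : Ω → ℝ) | m] ≤ᵐ[μ] 1 := by
  have h := condExp_mono (m := m) ((integrable_const (μ := μ) (1 : ℝ)).indicator hs)
    (integrable_const 1) (.of_forall (Set.indicator_le_self' fun _ _ => zero_le_one))
  rwa [condExp_const (μ := μ) hm] at h

theorem measureReal_iUnion_le_integral_min_condExp [IsFiniteMeasure μ] (hm : m ≤ m₀)
    {ι : Type*} [Fintype ι] {A : ι → Set Ω} (hA : ∀ i, MeasurableSet[m₀] (A i)) (i₀ : ι)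
    (hA_eq : ∀ i, μ[(A i).indicator (1 : Ω → ℝ) | m] =ᵐ[μ] μ[(A i₀).indicator 1 | m]) :
    μ.real (⋃ i, A i) ≤
      ∫ ω, min 1 (Fintype.card ι * μ[(A i₀).indicator (1 : Ω → ℝ) | m] ω) ∂μ := by
  have : IsFiniteMeasure (μ.trim hm) := isFiniteMeasure_trim hm
  have hbound : μ[(⋃ i, A i).indicator (1 : Ω → ℝ) | m] ≤ᵐ[μ]
      fun ω => min 1 (Fintype.card ι * μ[(A i₀).indicator (1 : Ω → ℝ) | m] ω) := by
    filter_upwards [condExp_indicator_le_one hm (MeasurableSet.iUnion hA),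
      condExp_indicator_iUnion_le_sum hA, ae_all_iff.2 hA_eq] with ω h_one h_sum h_eq
    refine le_min h_one (h_sum.trans_eq ?_)
    simp only [Finset.sum_apply, h_eq, Finset.sum_const, Finset.card_univ, nsmul_eq_mul]
  calc μ.real (⋃ i, A i) = ∫ ω, μ[(⋃ i, A i).indicator (1 : Ω → ℝ) | m] ω ∂μ := by
        rw [integral_condExp hm, integral_indicator_one (MeasurableSet.iUnion hA)]
    _ ≤ _ := integral_mono_ae integrable_condExp
        ((integrable_const 1).inf (integrable_condExp.const_mul _)) hbound

end ConditionalProbability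

section SameJointLaw

variable {Ω α β : Type*} [MeasurableSpace Ω] [MeasurableSpace α] [MeasurableSpace β]
  {μ : Measure Ω}

theorem condExp_comp_prodMk_ae_eq_of_identDistrib [IsFiniteMeasure μ] {V W : Ω → α} {Z : Ω → β}
    (hZ : Measurable Z)
    (hVW : IdentDistrib (fun ω => (V ω, Z ω)) (fun ω => (W ω, Z ω)) μ μ)
    {g : α × β → ℝ} (hg : Integrable g (μ.map fun ω => (V ω, Z ω))) :
    μ[fun ω => g (V ω, Z ω) | MeasurableSpace.comap Z inferInstance]
      =ᵐ[μ] μ[fun ω => g (W ω, Z ω) | MeasurableSpace.comap Z inferInstance] := by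
  have hm := hZ.comap_le
  have : IsFiniteMeasure (μ.trim hm) := isFiniteMeasure_trim hm
  have hgW : Integrable g (μ.map fun ω => (W ω, Z ω)) := hVW.map_eq ▸ hg
  have hgV_comp : Integrable (fun ω => g (V ω, Z ω)) μ := hg.comp_aemeasurable hVW.aemeasurable_fst
  have hgW_comp : Integrable (fun ω => g (W ω, Z ω)) μ := hgW.comp_aemeasurable hVW.aemeasurable_snd
  -- integrals over `{Z ∈ B}` only see the joint law
  have setIntegral_preimage_eq : ∀ (U : Ω → α), AEMeasurable (fun ω => (U ω, Z ω)) μ →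
      Integrable g (μ.map fun ω => (U ω, Z ω)) → ∀ B, MeasurableSet B →
      ∫ ω in Z ⁻¹' B, g (U ω, Z ω) ∂μ = ∫ p in Set.univ ×ˢ B, g p ∂(μ.map fun ω => (U ω, Z ω)) :=
    fun U hU hgU B hB => by
      rw [setIntegral_map (MeasurableSet.univ.prod hB) hgU.1 hU, Set.mk_preimage_prod,
        Set.preimage_univ, Set.univ_inter]
  refine ae_eq_condExp_of_forall_setIntegral_eq hm hgW_comp
    (fun _ _ _ => integrable_condExp.integrableOn) ?_
    stronglyMeasurable_condExp.aestronglyMeasurable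
  rintro _ ⟨B, hB, rfl⟩ -
  rw [setIntegral_condExp hm hgV_comp ⟨B, hB, rfl⟩,
    setIntegral_preimage_eq V hVW.aemeasurable_fst hg B hB,
    setIntegral_preimage_eq W hVW.aemeasurable_snd hgW B hB, hVW.map_eq]

end SameJointLaw

/-- The random-coding union (RCU) bound: the probability that at least one of `M - 1`
i.i.d. alternative codewords `X̄₁, …, X̄_{M−1}` (each distributed as `X` and jointly independent
of `(X, Y)`) achieves a decoding metric at least as large as that of the transmitted codeword
is bounded by `E[min{1, (M−1) · Pr[q(X̄₁, Y) ≥ q(X, Y) | X, Y]}]`, where the conditional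
probability given `(X, Y)` is the conditional expectation of the indicator of the pairwise
error event with respect to the σ-algebra generated by `(X, Y)`. -/
theorem rcu_bound
    {Ω 𝒳 𝒴 : Type*} [MeasurableSpace Ω] [MeasurableSpace 𝒳] [MeasurableSpace 𝒴]
    (μ : Measure Ω) [IsProbabilityMeasure μ]
    (X : Ω → 𝒳) (Y : Ω → 𝒴) (hX : Measurable X) (hY : Measurable Y)
    (M : ℕ) (hM : 2 ≤ M)
    (Xbar : Fin (M - 1) → Ω → 𝒳) (hXbarMeas : ∀ m, Measurable (Xbar m))
    (hIdent : ∀ m, IdentDistrib (Xbar m) X μ μ)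
    (hIndepXY : IndepFun (fun ω m => Xbar m ω) (fun ω => (X ω, Y ω)) μ)
    (q : 𝒳 → 𝒴 → ℝ) (hq : Measurable fun p : 𝒳 × 𝒴 => q p.1 p.2) :
    (μ {ω | ∃ m : Fin (M - 1), q (Xbar m ω) (Y ω) ≥ q (X ω) (Y ω)}).toReal ≤
      ∫ ω, min 1 (((M : ℝ) - 1) *
        (μ[Set.indicator {ω' | q (Xbar ⟨0, by omega⟩ ω') (Y ω') ≥ q (X ω') (Y ω')}
            (fun _ => (1 : ℝ)) |
          MeasurableSpace.comap (fun ω' => (X ω', Y ω')) inferInstance]) ω) ∂μ := by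
  set Z : Ω → 𝒳 × 𝒴 := fun ω => (X ω, Y ω)
  have hZ : Measurable Z := hX.prodMk hY
  -- the pairwise error event of codeword `m` is `{(X̄ₘ, Z) ∈ S}`
  let S : Set (𝒳 × (𝒳 × 𝒴)) := {p | q p.2.1 p.2.2 ≤ q p.1 p.2.2}
  have hS : MeasurableSet S :=
    measurableSet_le (hq.comp (measurable_snd.fst.prodMk measurable_snd.snd))
      (hq.comp (measurable_fst.prodMk measurable_snd.snd))
  have hIndep : ∀ m, IndepFun (Xbar m) Z μ := fun m =>
    hIndepXY.comp (measurable_pi_apply m) measurable_id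
  have hLaw : ∀ m m', IdentDistrib (fun ω => (Xbar m ω, Z ω)) (fun ω => (Xbar m' ω, Z ω)) μ μ :=
    fun m m' => ((hIdent m).trans (hIdent m').symm).prodMk (.refl hZ.aemeasurable)
      (hIndep m) (hIndep m')
  have hcard : (Fintype.card (Fin (M - 1)) : ℝ) = (M : ℝ) - 1 := by
    rw [Fintype.card_fin, Nat.cast_pred (by omega)]
  have hrcu := measureReal_iUnion_le_integral_min_condExp hZ.comap_le
    (fun m => hS.preimage ((hXbarMeas m).prodMk hZ)) ⟨0, by omega⟩
    (fun m => condExp_comp_prodMk_ae_eq_of_identDistrib hZ (hLaw m ⟨0, by omega⟩)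
      ((integrable_const 1).indicator hS))
  rw [hcard] at hrcu
  refine le_of_eq_of_le ?_ hrcu
  rw [measureReal_def]
  congr 2
  ext ω
  simp [S, Z]
end
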